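/- Let A be an m×n complex matrix (m ≥ n) with full column rank, with rows a_1*, …, a_m*, and let x ∈ ℂⁿ satisfy ⟨a_j, x⟩ = b_j for all j. For any y ∈ ℂⁿ, if a random index J ∈ {1,…,m} is chosen with P(J = j) = ‖a_j‖₂²/‖A‖_F², and y' = y + ((b_J − ⟨a_J, y⟩)/‖a_J‖₂²)·a_J, then E‖y' − x‖₂² ≤ (1 − κ(A)^{-2})·‖y − x‖₂², where κ(A) = ‖A‖_F/σ_min(A). -/

import Mathlib

open scoped BigOperators

/-- One step of the Kaczmarz iteration: orthogonal projection of `y` onto the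
hyperplane `{u : ⟨a j, u⟩ = b j}`. -/
noncomputable def kacStep {m n : ℕ} (a : Fin m → EuclideanSpace ℂ (Fin n))
    (b : Fin m → ℂ) (j : Fin m) (y : EuclideanSpace ℂ (Fin n)) :
    EuclideanSpace ℂ (Fin n) :=
  y + ((b j - (inner ℂ (a j) y : ℂ)) / ((‖a j‖ : ℂ) ^ 2)) • a j

/-- The Kaczmarz iterate obtained from `x0` by applying the steps with the row
indices listed in `l` (in order). -/
noncomputable def kacIter {m n : ℕ} (a : Fin m → EuclideanSpace ℂ (Fin n))
    (b : Fin m → ℂ) (x0 : EuclideanSpace ℂ (Fin n)) (l : List (Fin m)) :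
    EuclideanSpace ℂ (Fin n) :=
  l.foldl (fun y j => kacStep a b j y) x0

/-- The squared Frobenius norm `‖A‖_F² = ∑ j ‖a j‖₂²`. -/
noncomputable def frobSq {m n : ℕ} (a : Fin m → EuclideanSpace ℂ (Fin n)) : ℝ :=
  ∑ j, ‖a j‖ ^ 2

/-- The smallest singular value `σ_min(A) = inf {‖Az‖₂ : ‖z‖₂ = 1}`, where
`‖Az‖₂² = ∑ j ‖⟨a j, z⟩‖²`. -/
noncomputable def sigmaMin {m n : ℕ} (a : Fin m → EuclideanSpace ℂ (Fin n)) : ℝ :=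
  sInf {r : ℝ | ∃ z : EuclideanSpace ℂ (Fin n), ‖z‖ = 1 ∧
    r = Real.sqrt (∑ j, ‖(inner ℂ (a j) z : ℂ)‖ ^ 2)}

/-- The scaled condition number `κ(A) = ‖A‖_F / σ_min(A)`. -/
noncomputable def scaledCond {m n : ℕ} (a : Fin m → EuclideanSpace ℂ (Fin n)) : ℝ :=
  Real.sqrt (frobSq a) / sigmaMin a

/-!
Write `e = y - x`. Since `⟨a j, x⟩ = b j`, the Kaczmarz step removes from `e` its component
along `a j`, so by Pythagoras `‖y' - x‖² = ‖e‖² - |⟨a j, e⟩|² / ‖a j‖²`. Averaging with weights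
`‖a j‖² / ‖A‖_F²` cancels the denominators and leaves `‖e‖² - ‖A e‖² / ‖A‖_F²`, and
`‖A e‖ ≥ σ_min(A) ‖e‖` gives the bound.
-/

theorem norm_sub_inner_div_smul_sq {𝕜 E : Type*} [RCLike 𝕜] [NormedAddCommGroup E]
    [InnerProductSpace 𝕜 E] (a e : E) :
    ‖e - (inner 𝕜 a e / (‖a‖ : 𝕜) ^ 2) • a‖ ^ 2 = ‖e‖ ^ 2 - ‖inner 𝕜 a e‖ ^ 2 / ‖a‖ ^ 2 := by
  rcases eq_or_ne a 0 with rfl | ha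
  · simp
  have ha' : ‖a‖ ≠ 0 := norm_ne_zero_iff.mpr ha
  have hcross : inner 𝕜 e ((inner 𝕜 a e / (‖a‖ : 𝕜) ^ 2) • a)
      = ((‖inner 𝕜 a e‖ ^ 2 / ‖a‖ ^ 2 : ℝ) : 𝕜) := by
    rw [inner_smul_right, ← inner_conj_symm, div_mul_eq_mul_div, RCLike.conj_mul]
    push_cast
    rw [RCLike.norm_conj]
  rw [@norm_sub_sq 𝕜, hcross, RCLike.ofReal_re, norm_smul, norm_div, norm_pow,
    RCLike.norm_ofReal, abs_norm]
  field_simp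
  ring

section Kaczmarz

variable {m n : ℕ} (a : Fin m → EuclideanSpace ℂ (Fin n))

theorem kacStep_sub_of_inner_eq {b : Fin m → ℂ} {x : EuclideanSpace ℂ (Fin n)} {j : Fin m}
    (hx : inner ℂ (a j) x = b j) (y : EuclideanSpace ℂ (Fin n)) :
    kacStep a b j y - x = (y - x) - (inner ℂ (a j) (y - x) / (‖a j‖ : ℂ) ^ 2) • a j := by
  rw [kacStep, inner_sub_right, hx, ← neg_sub (b j), neg_div, neg_smul]
  abel

theorem frobSq_nonneg : 0 ≤ frobSq a :=
  Finset.sum_nonneg fun _ _ => sq_nonneg _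

theorem sigmaMin_nonneg : 0 ≤ sigmaMin a :=
  Real.sInf_nonneg <| by
    rintro r ⟨z, -, rfl⟩
    exact Real.sqrt_nonneg _

theorem sigmaMin_le_of_norm_eq_one {u : EuclideanSpace ℂ (Fin n)} (hu : ‖u‖ = 1) :
    sigmaMin a ≤ Real.sqrt (∑ j, ‖inner ℂ (a j) u‖ ^ 2) :=
  csInf_le ⟨0, by rintro r ⟨z, -, rfl⟩; exact Real.sqrt_nonneg _⟩ ⟨u, hu, rfl⟩

theorem sigmaMin_sq_mul_norm_sq_le (z : EuclideanSpace ℂ (Fin n)) :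
    sigmaMin a ^ 2 * ‖z‖ ^ 2 ≤ ∑ j, ‖inner ℂ (a j) z‖ ^ 2 := by
  rcases eq_or_ne z 0 with rfl | hz
  · simp
  have hz' : ‖z‖ ≠ 0 := norm_ne_zero_iff.mpr hz
  set u : EuclideanSpace ℂ (Fin n) := ((‖z‖ : ℂ))⁻¹ • z
  have hu : ‖u‖ = 1 := by
    rw [norm_smul, norm_inv, Complex.norm_real, norm_norm, inv_mul_cancel₀ hz']
  have hscale : ∑ j, ‖inner ℂ (a j) u‖ ^ 2 = (∑ j, ‖inner ℂ (a j) z‖ ^ 2) / ‖z‖ ^ 2 := by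
    simp only [u, inner_smul_right, norm_mul, norm_inv, Complex.norm_real, norm_norm, mul_pow,
      ← Finset.mul_sum]
    field_simp
  have hsq : sigmaMin a ^ 2 ≤ ∑ j, ‖inner ℂ (a j) u‖ ^ 2 := by
    calc sigmaMin a ^ 2 ≤ Real.sqrt (∑ j, ‖inner ℂ (a j) u‖ ^ 2) ^ 2 :=
          pow_le_pow_left₀ (sigmaMin_nonneg a) (sigmaMin_le_of_norm_eq_one a hu) 2
      _ = _ := Real.sq_sqrt (Finset.sum_nonneg fun _ _ => sq_nonneg _)
  rwa [hscale, le_div_iff₀ (by positivity)] at hsq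

theorem scaledCond_inv_sq : (scaledCond a)⁻¹ ^ 2 = sigmaMin a ^ 2 / frobSq a := by
  rw [scaledCond, inv_div, div_pow, Real.sq_sqrt (frobSq_nonneg a)]

/-- The factor `frobSq a / frobSq a` is `0`, not `1`, when all rows vanish. -/
theorem sum_weighted_norm_kacStep_sub_sq {b : Fin m → ℂ} {x : EuclideanSpace ℂ (Fin n)}
    (hx : ∀ j, inner ℂ (a j) x = b j) (y : EuclideanSpace ℂ (Fin n)) :
    ∑ j, ‖a j‖ ^ 2 / frobSq a * ‖kacStep a b j y - x‖ ^ 2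
      = frobSq a / frobSq a * ‖y - x‖ ^ 2 - (∑ j, ‖inner ℂ (a j) (y - x)‖ ^ 2) / frobSq a := by
  have hterm : ∀ j, ‖a j‖ ^ 2 / frobSq a * ‖kacStep a b j y - x‖ ^ 2
      = ‖a j‖ ^ 2 / frobSq a * ‖y - x‖ ^ 2 - ‖inner ℂ (a j) (y - x)‖ ^ 2 / frobSq a := by
    intro j
    rw [kacStep_sub_of_inner_eq a (hx j), ← RCLike.ofReal_eq_complex_ofReal,
      norm_sub_inner_div_smul_sq]
    rcases eq_or_ne (a j) 0 with haj | haj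
    · simp [haj]
    · have : ‖a j‖ ≠ 0 := norm_ne_zero_iff.mpr haj
      field_simp
  rw [Finset.sum_congr rfl fun j _ => hterm j, Finset.sum_sub_distrib, ← Finset.sum_mul,
    ← Finset.sum_div, ← Finset.sum_div, frobSq]

end Kaczmarz

theorem randomized_kaczmarz_one_step_general
    (m n : ℕ)
    (a : Fin m → EuclideanSpace ℂ (Fin n)) (b : Fin m → ℂ)
    (x : EuclideanSpace ℂ (Fin n)) (hx : ∀ j, (inner ℂ (a j) x : ℂ) = b j)
    (y : EuclideanSpace ℂ (Fin n)) :
    ∑ j : Fin m, (‖a j‖ ^ 2 / frobSq a) * ‖kacStep a b j y - x‖ ^ 2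
      ≤ (1 - ((scaledCond a)⁻¹) ^ 2) * ‖y - x‖ ^ 2 := by
  rw [sum_weighted_norm_kacStep_sub_sq a hx, scaledCond_inv_sq]
  have hmass : frobSq a / frobSq a * ‖y - x‖ ^ 2 ≤ ‖y - x‖ ^ 2 :=
    mul_le_of_le_one_left (sq_nonneg _) (div_self_le_one _)
  have hspec : sigmaMin a ^ 2 * ‖y - x‖ ^ 2 / frobSq a
      ≤ (∑ j, ‖inner ℂ (a j) (y - x)‖ ^ 2) / frobSq a :=
    div_le_div_of_nonneg_right (sigmaMin_sq_mul_norm_sq_le a _) (frobSq_nonneg a)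
  calc frobSq a / frobSq a * ‖y - x‖ ^ 2 - (∑ j, ‖inner ℂ (a j) (y - x)‖ ^ 2) / frobSq a
      ≤ ‖y - x‖ ^ 2 - sigmaMin a ^ 2 * ‖y - x‖ ^ 2 / frobSq a := by linarith
    _ = (1 - sigmaMin a ^ 2 / frobSq a) * ‖y - x‖ ^ 2 := by ring

/-- **One-step expected decay of the randomized Kaczmarz method**:
if `J` is chosen with `P(J = j) = ‖a j‖²/‖A‖_F²` and `y'` is the Kaczmarz
update of `y` using row `J`, then `E ‖y' − x‖₂² ≤ (1 − κ(A)⁻²) ‖y − x‖₂²`. -/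
theorem randomized_kaczmarz_one_step
    (m n : ℕ) (hmn : n ≤ m)
    (a : Fin m → EuclideanSpace ℂ (Fin n)) (b : Fin m → ℂ)
    (hrank : ∀ z : EuclideanSpace ℂ (Fin n), (∀ j, (inner ℂ (a j) z : ℂ) = 0) → z = 0)
    (x : EuclideanSpace ℂ (Fin n)) (hx : ∀ j, (inner ℂ (a j) x : ℂ) = b j)
    (y : EuclideanSpace ℂ (Fin n)) :
    ∑ j : Fin m, (‖a j‖ ^ 2 / frobSq a) * ‖kacStep a b j y - x‖ ^ 2
      ≤ (1 - ((scaledCond a)⁻¹) ^ 2) * ‖y - x‖ ^ 2 :=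
  randomized_kaczmarz_one_step_general m n a b x hx y
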